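/- Fix real numbers α, β, r with 0 < r < 1 and |α| + |β|/r < 1. Let W be a row-stochastic N×N matrix with nonnegative entries, and suppose there is an integer K such that Wⁿ ≤ 2·𝟙 π entrywise for all n ≥ K (where π is a row vector of nonnegative entries summing to 1). Set M = 2·𝟙 π + Σ_{j=0}^{K} r^j W^j and G₁ = αI + βW. Then for all integers j ≥ 0, |G₁^j| ≤ (|α| + |β|/r)^j · M entrywise (where |·| denotes taking entrywise absolute values). -/
import Mathlib


open Matrix

/-- Entrywise bound |G₁^j| ≤ (|α| + |β|/r)^j · M where
M = 2·𝟙π + Σ_{j=0}^{K} r^j W^j, given Wⁿ ≤ 2·𝟙π entrywise for n ≥ K. -/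
theorem stmt_9 {N : ℕ} (α β r : ℝ) (hr0 : 0 < r) (hr1 : r < 1)
    (hab : |α| + |β| / r < 1)
    (W : Matrix (Fin N) (Fin N) ℝ)
    (hWnonneg : ∀ i j, 0 ≤ W i j) (hWrow : ∀ i, ∑ j, W i j = 1)
    (π : Fin N → ℝ) (hπnonneg : ∀ j, 0 ≤ π j) (hπsum : ∑ j, π j = 1)
    (K : ℕ) (hK : ∀ n : ℕ, K ≤ n → ∀ i j, (W ^ n) i j ≤ 2 * π j)
    (M : Matrix (Fin N) (Fin N) ℝ)
    (hM : ∀ i j, M i j = 2 * π j + ∑ k ∈ Finset.range (K + 1), r ^ k * (W ^ k) i j)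
    (G₁ : Matrix (Fin N) (Fin N) ℝ)
    (hG : G₁ = α • (1 : Matrix (Fin N) (Fin N) ℝ) + β • W) :
    ∀ (j : ℕ) (i l : Fin N), |(G₁ ^ j) i l| ≤ (|α| + |β| / r) ^ j * M i l := by
  have hWk : ∀ (k : ℕ) (i l : Fin N), 0 ≤ (W ^ k) i l := by
    intro k
    induction k with
    | zero =>
      intro i l
      rw [pow_zero]
      by_cases h : i = l <;> simp [Matrix.one_apply, h]
    | succ n ih =>
      intro i l
      rw [pow_succ, Matrix.mul_apply]
      exact Finset.sum_nonneg fun m _ => mul_nonneg (ih i m) (hWnonneg m l)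
  have h2π : ∀ l, (0:ℝ) ≤ 2 * π l := fun l => by have := hπnonneg l; linarith
  have hMnn : ∀ i l, 0 ≤ M i l := by
    intro i l
    rw [hM]
    refine add_nonneg (h2π l) (Finset.sum_nonneg fun k _ => mul_nonneg (by positivity) (hWk k i l))
  -- key entrywise bound for powers of W
  have hkey : ∀ (m : ℕ) (i l : Fin N), |β| ^ m * (W ^ m) i l ≤ (|β| / r) ^ m * M i l := by
    intro m i l
    rcases le_or_gt m K with hmK | hKm
    · have h1 : r ^ m * (W ^ m) i l ≤ M i l := by
        rw [hM]
        have := Finset.single_le_sum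
          (f := fun k => r ^ k * (W ^ k) i l)
          (fun k _ => mul_nonneg (by positivity) (hWk k i l))
          (Finset.mem_range.mpr (Nat.lt_succ_of_le hmK))
        simp only [Nat.succ_eq_add_one] at this
        linarith [h2π l]
      have hβ : |β| ^ m = (|β| / r) ^ m * r ^ m := by
        rw [← mul_pow, div_mul_cancel₀ _ (ne_of_gt hr0)]
      rw [hβ, mul_assoc]
      exact mul_le_mul_of_nonneg_left h1 (by positivity)
    · have h1 : (W ^ m) i l ≤ M i l := by
        rw [hM]
        have := hK m (le_of_lt hKm) i l
        have hs : 0 ≤ ∑ k ∈ Finset.range (K + 1), r ^ k * (W ^ k) i l :=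
          Finset.sum_nonneg fun k _ => mul_nonneg (by positivity) (hWk k i l)
        linarith
      have hβ : |β| ^ m ≤ (|β| / r) ^ m := by
        apply pow_le_pow_left₀ (abs_nonneg β)
        rw [le_div_iff₀ hr0]
        nlinarith [abs_nonneg β]
      exact mul_le_mul hβ h1 (hWk m i l) (by positivity)
  intro j i l
  have key : (G₁ ^ j) i l
      = ∑ k ∈ Finset.range (j + 1),
          α ^ k * β ^ (j - k) * (j.choose k : ℝ) * (W ^ (j - k)) i l := by
    subst hG
    rw [((Commute.one_left (β • W)).smul_left α).add_pow, Matrix.sum_apply]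
    refine Finset.sum_congr rfl fun k hk => ?_
    rw [smul_pow, smul_pow, one_pow]
    simp [Matrix.mul_apply, Matrix.smul_apply, Matrix.one_apply, ← Matrix.diagonal_natCast, Matrix.diagonal_apply,
      Finset.mul_sum, apply_ite, mul_comm, mul_assoc, mul_left_comm]
  calc |(G₁ ^ j) i l|
      ≤ ∑ k ∈ Finset.range (j + 1),
          |α| ^ k * (|β| ^ (j - k) * (W ^ (j - k)) i l) * (j.choose k : ℝ) := by
        rw [key]
        refine (Finset.abs_sum_le_sum_abs _ _).trans (Finset.sum_le_sum fun k _ => ?_)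
        rw [abs_mul, abs_mul, abs_mul, abs_pow, abs_pow, abs_of_nonneg (hWk _ i l),
          Nat.abs_cast]
        ring_nf
        exact le_of_eq (by ring)
    _ ≤ ∑ k ∈ Finset.range (j + 1),
          |α| ^ k * ((|β| / r) ^ (j - k) * M i l) * (j.choose k : ℝ) := by
        refine Finset.sum_le_sum fun k _ => ?_
        exact mul_le_mul_of_nonneg_right
          (mul_le_mul_of_nonneg_left (hkey _ i l) (by positivity))
          (Nat.cast_nonneg _)
    _ = (|α| + |β| / r) ^ j * M i l := by
        rw [add_pow, Finset.sum_mul]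
        exact Finset.sum_congr rfl fun k _ => by ring
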